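/- arXiv:2504.04992 — 5 statements merged into one kernel-verified Lean document; each statement's English description precedes it below -/
import Mathlib

section
/- Let g₀ > 0 and t > 0, and let f : (0,∞) → ℝ be a measurable function satisfying |f(τ) − g₀·τ^(−1/2)| ≤ (g₀/35)·τ^(1/2) for all τ > 0. Then |∫₀^∞ e^(−τ/t) f(τ) dτ − g₀·√(π t)| ≤ (1/70)·t·g₀·√(π t). -/
open MeasureTheory Real Set

lemma aux_int (t : ℝ) (ht : 0 < t) (a : ℝ) (ha : 0 < a) :
    ∫ τ in Ioi (0 : ℝ), Real.exp (-τ / t) * τ ^ (a - 1) = t ^ a * Real.Gamma a := by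
  have h := Real.integral_rpow_mul_exp_neg_mul_Ioi ha (show (0:ℝ) < 1/t by positivity)
  rw [one_div_one_div] at h
  rw [← h]
  refine setIntegral_congr_fun measurableSet_Ioi (fun τ hτ => ?_)
  rw [mul_comm]
  congr 1
  rw [neg_div]
  ring_nf

lemma aux_integrable (t : ℝ) (ht : 0 < t) (s : ℝ) (hs : -1 < s) :
    IntegrableOn (fun τ => Real.exp (-τ / t) * τ ^ s) (Ioi 0) := by
  have h := integrableOn_rpow_mul_exp_neg_mul_rpow hs (show (0:ℝ) < 1 by norm_num)
    (show (0:ℝ) < 1/t by positivity)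
  refine (h.congr_fun (fun τ hτ => ?_) measurableSet_Ioi)
  beta_reduce
  rw [Real.rpow_one, mul_comm]
  congr 1
  rw [neg_div]
  ring_nf

/-- Abstract form of the paper's main error bound (Proposition 1): if
`f` deviates from the leading Watson term `g₀ τ^(-1/2)` by at most
`(g₀/35) τ^(1/2)` on `(0,∞)`, then the Laplace-type integral
`∫₀^∞ e^(−τ/t) f(τ) dτ` deviates from its leading value `g₀ √(π t)`
by at most `(1/70)·t·g₀·√(π t)`. -/
theorem watson_leading_term_error_bound
    (g₀ t : ℝ) (hg₀ : 0 < g₀) (ht : 0 < t)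
    (f : ℝ → ℝ) (hf : Measurable f)
    (hbound : ∀ τ : ℝ, 0 < τ →
      |f τ - g₀ * τ ^ (-(1 : ℝ) / 2)| ≤ (g₀ / 35) * τ ^ ((1 : ℝ) / 2)) :
    |(∫ τ in Ioi (0 : ℝ), Real.exp (-τ / t) * f τ) - g₀ * Real.sqrt (π * t)|
      ≤ (1 / 70) * t * g₀ * Real.sqrt (π * t) := by
  have hsqrt : Real.sqrt (π * t) = Real.sqrt π * Real.sqrt t :=
    Real.sqrt_mul pi_pos.le t
  -- the leading integral
  have hA : ∫ τ in Ioi (0 : ℝ), Real.exp (-τ / t) * τ ^ (-(1:ℝ)/2)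
      = Real.sqrt (π * t) := by
    have := aux_int t ht (1/2) (by norm_num)
    rw [show (1:ℝ)/2 - 1 = -(1:ℝ)/2 by norm_num] at this
    rw [this, Real.Gamma_one_half_eq, hsqrt, mul_comm]
    congr 1
    rw [Real.sqrt_eq_rpow]
  have hB : ∫ τ in Ioi (0 : ℝ), Real.exp (-τ / t) * τ ^ ((1:ℝ)/2)
      = t / 2 * Real.sqrt (π * t) := by
    have := aux_int t ht (3/2) (by norm_num)
    rw [show (3:ℝ)/2 - 1 = (1:ℝ)/2 by norm_num] at this
    rw [this]
    have hg32 : Real.Gamma (3/2) = Real.sqrt π / 2 := by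
      rw [show (3:ℝ)/2 = 1/2 + 1 by norm_num, Real.Gamma_add_one (by norm_num),
        Real.Gamma_one_half_eq]
      ring
    rw [hg32, hsqrt]
    rw [show (3:ℝ)/2 = 1 + 1/2 by norm_num, Real.rpow_add ht, Real.rpow_one,
      ← Real.sqrt_eq_rpow]
    ring
  -- integrability facts
  have hIA := aux_integrable t ht (-(1:ℝ)/2) (by norm_num)
  have hIB := aux_integrable t ht ((1:ℝ)/2) (by norm_num)
  have hIg : IntegrableOn (fun τ => Real.exp (-τ / t) * (g₀ * τ ^ (-(1:ℝ)/2))) (Ioi 0) := by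
    show Integrable _ (volume.restrict (Ioi 0))
    simpa [mul_left_comm, mul_comm, mul_assoc] using hIA.const_mul g₀
  have hIbnd : IntegrableOn (fun τ => Real.exp (-τ / t) * ((g₀/35) * τ ^ ((1:ℝ)/2))) (Ioi 0) := by
    show Integrable _ (volume.restrict (Ioi 0))
    simpa [mul_left_comm, mul_comm, mul_assoc] using hIB.const_mul (g₀/35)
  have hIf : IntegrableOn (fun τ => Real.exp (-τ / t) * f τ) (Ioi 0) := by
    refine Integrable.mono' (hIg.add hIbnd) ?_ ?_
    · exact ((Real.measurable_exp.comp ((measurable_id.neg).div_const t)).mul hf).aestronglyMeasurable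
    · filter_upwards [ae_restrict_mem measurableSet_Ioi] with τ hτ
      have hτ' : (0:ℝ) < τ := hτ
      have h1 := hbound τ hτ'
      have he : 0 < Real.exp (-τ / t) := Real.exp_pos _
      simp only [Pi.add_apply, Real.norm_eq_abs]
      rw [abs_mul, abs_of_pos he]
      have : |f τ| ≤ g₀ * τ ^ (-(1:ℝ)/2) + (g₀/35) * τ ^ ((1:ℝ)/2) := by
        have := abs_sub_abs_le_abs_sub (f τ) (g₀ * τ ^ (-(1:ℝ)/2))
        have habs : |g₀ * τ ^ (-(1:ℝ)/2)| = g₀ * τ ^ (-(1:ℝ)/2) := by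
          rw [abs_of_pos]; positivity
        linarith [h1, this, habs.le]
      calc Real.exp (-τ/t) * |f τ|
          ≤ Real.exp (-τ/t) * (g₀ * τ ^ (-(1:ℝ)/2) + (g₀/35) * τ ^ ((1:ℝ)/2)) := by
            exact mul_le_mul_of_nonneg_left this he.le
        _ = Real.exp (-τ/t) * (g₀ * τ ^ (-(1:ℝ)/2)) + Real.exp (-τ/t) * ((g₀/35) * τ ^ ((1:ℝ)/2)) := by ring
  -- main estimate
  have hgint : ∫ τ in Ioi (0:ℝ), Real.exp (-τ/t) * (g₀ * τ ^ (-(1:ℝ)/2))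
      = g₀ * Real.sqrt (π * t) := by
    rw [show (fun τ => Real.exp (-τ/t) * (g₀ * τ ^ (-(1:ℝ)/2)))
        = (fun τ => g₀ * (Real.exp (-τ/t) * τ ^ (-(1:ℝ)/2))) by funext τ; ring]
    rw [integral_const_mul, hA]
  have key : |(∫ τ in Ioi (0 : ℝ), Real.exp (-τ / t) * f τ) - g₀ * Real.sqrt (π * t)|
      ≤ ∫ τ in Ioi (0:ℝ), Real.exp (-τ/t) * ((g₀/35) * τ ^ ((1:ℝ)/2)) := by
    rw [← hgint, ← integral_sub hIf hIg]
    rw [← Real.norm_eq_abs]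
    refine (norm_integral_le_integral_norm _).trans ?_
    refine integral_mono_of_nonneg ?_ hIbnd ?_
    · filter_upwards with τ using norm_nonneg _
    · filter_upwards [ae_restrict_mem measurableSet_Ioi] with τ hτ
      have hτ' : (0:ℝ) < τ := hτ
      have he : 0 < Real.exp (-τ / t) := Real.exp_pos _
      have : Real.exp (-τ/t) * f τ - Real.exp (-τ/t) * (g₀ * τ ^ (-(1:ℝ)/2))
          = Real.exp (-τ/t) * (f τ - g₀ * τ ^ (-(1:ℝ)/2)) := by ring
      rw [Real.norm_eq_abs, this, abs_mul, abs_of_pos he]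
      exact mul_le_mul_of_nonneg_left (hbound τ hτ') he.le
  refine key.trans ?_
  have : ∫ τ in Ioi (0:ℝ), Real.exp (-τ/t) * ((g₀/35) * τ ^ ((1:ℝ)/2))
      = (g₀/35) * (t/2 * Real.sqrt (π * t)) := by
    rw [show (fun τ => Real.exp (-τ/t) * ((g₀/35) * τ ^ ((1:ℝ)/2)))
        = (fun τ => (g₀/35) * (Real.exp (-τ/t) * τ ^ ((1:ℝ)/2))) by funext τ; ring]
    rw [integral_const_mul, hB]
  rw [this]
  ring_nf
  nlinarith [Real.sqrt_nonneg (π * t)]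
end

section
/- Define ϑ_max : (0,∞) → ℝ by ϑ_max(t) = (π t)^(−1/2) · ∫₀^∞ e^(−τ/t) · min(τ/35, 1) · τ^(−1/2) dτ. Then (i) ϑ_max(t) ≤ t/70 for all t > 0, and (ii) lim_{t→∞} ϑ_max(t) = 1. -/
open MeasureTheory Real Set Filter

/-- The improved error bound `ϑ_max` of Remark 1, in integral form. -/
noncomputable def thetaMax (t : ℝ) : ℝ :=
  (π * t) ^ (-(1 : ℝ) / 2) *
    ∫ τ in Ioi (0 : ℝ), Real.exp (-τ / t) * min (τ / 35) 1 * τ ^ (-(1 : ℝ) / 2)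

namespace ThetaAux

/-- The integrand after the substitution `τ = t s`. -/
noncomputable def F (t s : ℝ) : ℝ :=
  Real.exp (-s) * min (t * s / 35) 1 * s ^ (-(1 : ℝ) / 2)

lemma meas (t : ℝ) : AEStronglyMeasurable (F t) (volume.restrict (Ioi (0:ℝ))) := by
  have : Measurable (F t) := by unfold F; fun_prop
  exact this.aestronglyMeasurable

lemma bound_integrable :
    IntegrableOn (fun s : ℝ => Real.exp (-s) * s ^ (-(1 : ℝ) / 2)) (Ioi 0) := by
  have h := Real.GammaIntegral_convergent (by norm_num : (0:ℝ) < 1/2)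
  rw [show ((1:ℝ)/2 - 1) = -(1:ℝ)/2 by norm_num] at h
  exact h

lemma F_nonneg {t : ℝ} (ht : 0 ≤ t) {s : ℝ} (hs : 0 < s) : 0 ≤ F t s := by
  unfold F
  have : (0:ℝ) ≤ min (t * s / 35) 1 := le_min (by positivity) zero_le_one
  positivity

lemma F_le {t s : ℝ} (hs : 0 < s) :
    F t s ≤ Real.exp (-s) * s ^ (-(1 : ℝ) / 2) := by
  unfold F
  calc Real.exp (-s) * min (t * s / 35) 1 * s ^ (-(1 : ℝ) / 2)
      ≤ Real.exp (-s) * 1 * s ^ (-(1 : ℝ) / 2) := by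
        apply mul_le_mul_of_nonneg_right _ (rpow_nonneg hs.le _)
        exact mul_le_mul_of_nonneg_left (min_le_right _ _) (exp_nonneg _)
    _ = Real.exp (-s) * s ^ (-(1 : ℝ) / 2) := by ring

lemma F_integrable {t : ℝ} (ht : 0 ≤ t) : IntegrableOn (F t) (Ioi 0) := by
  apply Integrable.mono' bound_integrable (meas t)
  filter_upwards [ae_restrict_mem measurableSet_Ioi] with s hs
  rw [Real.norm_eq_abs, abs_of_nonneg (F_nonneg ht hs)]
  exact F_le hs

lemma thetaMax_eq {t : ℝ} (ht : 0 < t) :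
    thetaMax t = π ^ (-(1 : ℝ) / 2) * ∫ s in Ioi (0:ℝ), F t s := by
  have h := integral_comp_mul_left_Ioi
    (fun τ : ℝ => Real.exp (-τ / t) * min (τ / 35) 1 * τ ^ (-(1 : ℝ) / 2)) 0 ht
  simp only [smul_eq_mul, mul_zero] at h
  have h2 : (∫ x in Ioi (0:ℝ),
        Real.exp (-(t * x) / t) * min (t * x / 35) 1 * (t * x) ^ (-(1 : ℝ) / 2))
      = t ^ (-(1 : ℝ) / 2) * ∫ s in Ioi (0:ℝ), F t s := by
    rw [← integral_const_mul]
    refine setIntegral_congr_fun measurableSet_Ioi fun s hs => ?_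
    have hs0 : (0:ℝ) < s := hs
    rw [Real.mul_rpow ht.le hs0.le, neg_div, mul_div_cancel_left₀ _ ht.ne']
    unfold F; ring
  rw [h2] at h
  have key : (∫ τ in Ioi (0:ℝ),
        Real.exp (-τ / t) * min (τ / 35) 1 * τ ^ (-(1 : ℝ) / 2))
      = t * (t ^ (-(1 : ℝ) / 2) * ∫ s in Ioi (0:ℝ), F t s) := by
    rw [h, ← mul_assoc, mul_inv_cancel₀ ht.ne', one_mul]
  have ht2 : t ^ (-(1:ℝ)/2) * t ^ (-(1:ℝ)/2) = t⁻¹ := by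
    rw [← Real.rpow_add ht, show (-(1:ℝ)/2 + -(1:ℝ)/2) = -1 by norm_num,
      Real.rpow_neg_one]
  unfold thetaMax
  rw [key, Real.mul_rpow pi_pos.le ht.le]
  set I := ∫ s in Ioi (0:ℝ), F t s
  have : π ^ (-(1:ℝ)/2) * t ^ (-(1:ℝ)/2) * (t * (t ^ (-(1:ℝ)/2) * I))
      = π ^ (-(1:ℝ)/2) * (t ^ (-(1:ℝ)/2) * t ^ (-(1:ℝ)/2) * t) * I := by ring
  rw [this, ht2, inv_mul_cancel₀ ht.ne', mul_one]

lemma pi_cancel : π ^ (-(1:ℝ)/2) * Real.sqrt π = 1 := by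
  rw [Real.sqrt_eq_rpow, ← Real.rpow_add pi_pos,
    show (-(1:ℝ)/2 + 1/2) = 0 by norm_num, Real.rpow_zero]

lemma part_one {t : ℝ} (ht : 0 < t) : thetaMax t ≤ t / 70 := by
  rw [thetaMax_eq ht]
  have hmaj : IntegrableOn
      (fun s : ℝ => t / 35 * (Real.exp (-s) * s ^ ((3:ℝ)/2 - 1))) (Ioi 0) :=
    (Real.GammaIntegral_convergent (by norm_num : (0:ℝ) < 3/2)).const_mul _
  have hle : (∫ s in Ioi (0:ℝ), F t s)
      ≤ ∫ s in Ioi (0:ℝ), t / 35 * (Real.exp (-s) * s ^ ((3:ℝ)/2 - 1)) := by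
    refine setIntegral_mono_on (F_integrable ht.le) hmaj measurableSet_Ioi
      fun s hs => ?_
    have hs0 : (0:ℝ) < s := hs
    have hsr : s * s ^ (-(1:ℝ)/2) = s ^ ((3:ℝ)/2 - 1) := by
      rw [show ((3:ℝ)/2 - 1) = 1 + (-(1:ℝ)/2) by norm_num, Real.rpow_add hs0,
        Real.rpow_one]
    calc F t s ≤ Real.exp (-s) * (t * s / 35) * s ^ (-(1:ℝ)/2) := by
          unfold F
          exact mul_le_mul_of_nonneg_right
            (mul_le_mul_of_nonneg_left (min_le_left _ _) (exp_nonneg _))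
            (rpow_nonneg hs0.le _)
      _ = t / 35 * (Real.exp (-s) * (s * s ^ (-(1:ℝ)/2))) := by ring
      _ = t / 35 * (Real.exp (-s) * s ^ ((3:ℝ)/2 - 1)) := by rw [hsr]
  have hGamma : (∫ s in Ioi (0:ℝ), t / 35 * (Real.exp (-s) * s ^ ((3:ℝ)/2 - 1)))
      = t / 35 * (Real.sqrt π / 2) := by
    rw [integral_const_mul, ← Real.Gamma_eq_integral (by norm_num : (0:ℝ) < 3/2)]
    have : Real.Gamma ((3:ℝ)/2) = (1/2) * Real.sqrt π := by
      rw [show ((3:ℝ)/2) = 1/2 + 1 by norm_num,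
        Real.Gamma_add_one (by norm_num : (1:ℝ)/2 ≠ 0), Real.Gamma_one_half_eq]
    rw [this]; ring
  calc π ^ (-(1:ℝ)/2) * ∫ s in Ioi (0:ℝ), F t s
      ≤ π ^ (-(1:ℝ)/2) * (t / 35 * (Real.sqrt π / 2)) := by
        rw [← hGamma]
        exact mul_le_mul_of_nonneg_left hle (rpow_nonneg pi_pos.le _)
    _ = (π ^ (-(1:ℝ)/2) * Real.sqrt π) * (t / 70) := by ring
    _ = t / 70 := by rw [pi_cancel, one_mul]

lemma part_two : Tendsto thetaMax atTop (nhds 1) := by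
  have hI : Tendsto (fun t : ℝ => ∫ s in Ioi (0:ℝ), F t s) atTop
      (nhds (∫ s in Ioi (0:ℝ), Real.exp (-s) * s ^ (-(1:ℝ)/2))) := by
    refine tendsto_integral_filter_of_dominated_convergence
      (fun s : ℝ => Real.exp (-s) * s ^ (-(1:ℝ)/2))
      (Eventually.of_forall meas) ?_ bound_integrable ?_
    · filter_upwards [eventually_ge_atTop (0:ℝ)] with t ht
      filter_upwards [ae_restrict_mem measurableSet_Ioi] with s hs
      rw [Real.norm_eq_abs, abs_of_nonneg (F_nonneg ht hs)]
      exact F_le hs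
    · filter_upwards [ae_restrict_mem measurableSet_Ioi] with s hs
      have hs0 : (0:ℝ) < s := hs
      refine Tendsto.congr' ?_ tendsto_const_nhds
      filter_upwards [eventually_ge_atTop (35 / s)] with t ht
      have h35 : (35:ℝ) ≤ t * s := (div_le_iff₀ hs0).mp ht
      have hmin : min (t * s / 35) 1 = 1 :=
        min_eq_right (by rw [le_div_iff₀ (by norm_num : (0:ℝ) < 35)]; linarith)
      unfold F; rw [hmin]; ring
  have hval : (∫ s in Ioi (0:ℝ), Real.exp (-s) * s ^ (-(1:ℝ)/2)) = Real.sqrt π := by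
    rw [show (-(1:ℝ)/2) = (1:ℝ)/2 - 1 by norm_num,
      ← Real.Gamma_eq_integral (by norm_num : (0:ℝ) < 1/2), Real.Gamma_one_half_eq]
  rw [hval] at hI
  have h2 : Tendsto (fun t : ℝ => π ^ (-(1:ℝ)/2) * ∫ s in Ioi (0:ℝ), F t s) atTop
      (nhds 1) := by
    have := hI.const_mul (π ^ (-(1:ℝ)/2))
    rwa [pi_cancel] at this
  refine h2.congr' ?_
  filter_upwards [eventually_gt_atTop (0:ℝ)] with t ht
  exact (thetaMax_eq ht).symm

end ThetaAux

/-- (i) `ϑ_max(t) ≤ t/70` for all `t > 0`, and (ii) `ϑ_max(t) → 1` as `t → ∞`. -/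
theorem thetaMax_le_and_tendsto :
    (∀ t : ℝ, 0 < t → thetaMax t ≤ t / 70) ∧
      Tendsto thetaMax atTop (nhds 1) := by
  exact ⟨fun t ht => ThetaAux.part_one ht, ThetaAux.part_two⟩
end

section
/- There exist real constants ε > 0 and C > 0 such that for every ζ ∈ ℂ with 0 < |ζ| < ε, Re ζ > 0, Im ζ < 0, and such that τ := ζ²/2 − cosh ζ + 1 is a positive real number, one has | ζ² − ( −2√6·i·τ^(1/2) + (2/5)·τ + (2/35)·√(2/3)·i·τ^(3/2) ) | ≤ C·τ². -/
open Real Complex Finset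

/- ### Arithmetic helper lemmas (kept in minimal context for speed) -/

noncomputable def Complex.abs : AbsoluteValue ℂ ℝ := NormedField.toAbsoluteValue ℂ

lemma Complex.abs_ofReal (r : ℝ) : Complex.abs (r : ℂ) = |r| := Complex.norm_real r

lemma Complex.abs_I : Complex.abs Complex.I = 1 := Complex.norm_I

@[simp] lemma Complex.abs_ofNat' (n : ℕ) [n.AtLeastTwo] :
    Complex.abs (no_index (OfNat.ofNat n : ℂ)) = OfNat.ofNat n := Complex.norm_ofNat n

lemma Complex.abs_two : Complex.abs (2 : ℂ) = 2 := by
  show ‖(2 : ℂ)‖ = 2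
  norm_num

lemma hw_habs_sub (a b : ℂ) : Complex.abs (a - b) ≤ Complex.abs a + Complex.abs b := by
  simpa [sub_eq_add_neg] using Complex.abs.add_le a (-b)

lemma hw_habs_add (a b : ℂ) : Complex.abs (a + b) ≤ Complex.abs a + Complex.abs b :=
  Complex.abs.add_le a b

lemma hw_sqrt6 : (2.4:ℝ) ≤ Real.sqrt 6 ∧ Real.sqrt 6 ≤ 2.5 := by
  have h6 : (Real.sqrt 6)^2 = 6 := Real.sq_sqrt (by norm_num)
  have h6nn : 0 ≤ Real.sqrt 6 := Real.sqrt_nonneg 6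
  constructor <;> nlinarith

lemma hw_sq_small (x : ℝ) (h0 : 0 ≤ x) (h : x < 1/200) : x^2 < 1/40000 := by nlinarith

lemma hw_Wub (W t : ℝ) (hW0 : 0 < W) (ht : 0 < t) (hq : W^2 ≤ 24*t^2 + W^2/1000) :
    W ≤ 5*t := by nlinarith [mul_pos ht ht]

lemma hw_Wlb (W t : ℝ) (hW0 : 0 < W) (ht : 0 < t) (hq : 24*t^2 ≤ W^2 + W^2/1000) :
    4*t ≤ W := by nlinarith [mul_pos ht ht]

lemma hw_small (W : ℝ) (hW0 : 0 < W) (hWs : W < 1/40000) :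
    W^3/30 + W^4/1680 + 24*W^5 ≤ W^2/1000 := by
  have c1 : W^3 ≤ W^2 * (1/40000) := by nlinarith
  have c2 : W^4 ≤ W^2 * (1/40000)^2 := by nlinarith
  have c3 : W^5 ≤ W^2 * (1/40000)^3 := by nlinarith
  nlinarith

lemma hw_chain (W t : ℝ) (hW0 : 0 < W) (hWs : W < 1/40000) (ht : 0 < t)
    (h3 : W^3 ≤ 125*t^3) : W^3/30 + W^4/1680 + 24*W^5 ≤ 5*t^3 := by
  have c1 : W^4 ≤ W^3 * (1/40000) := by
    nlinarith [mul_lt_mul_of_pos_left hWs (pow_pos hW0 3)]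
  have c2 : W^5 ≤ W^3 * (1/40000)^2 := by
    nlinarith [mul_lt_mul_of_pos_left hWs (pow_pos hW0 4),
      mul_lt_mul_of_pos_left hWs (pow_pos hW0 3), pow_pos hW0 3, pow_pos hW0 4]
  have h3nn : 0 ≤ t^3 := by positivity
  nlinarith

lemma hw_div1 (A B t : ℝ) (ht : 0 < t) (hA : 0 ≤ A) (h : A*B ≤ 5*t^3)
    (hB : (24/5)*t ≤ B) : A ≤ (25/24)*t^2 := by
  nlinarith [mul_pos ht ht]

lemma hw_div2 (A B t : ℝ) (ht : 0 < t) (hA : 0 ≤ A) (h : A*B ≤ 7*t^4)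
    (hB : 8*t ≤ B) : A ≤ t^3 := by
  nlinarith [mul_pos ht (mul_pos ht ht)]

lemma hw_div3 (A B t : ℝ) (ht : 0 < t) (hA : 0 ≤ A) (h : A*B ≤ 80000*t^5)
    (hB : 7*t ≤ B) : A ≤ 12000*t^4 := by
  nlinarith [mul_pos ht (mul_pos ht (mul_pos ht ht))]

lemma hw_2t (A t : ℝ) (h : A ≤ (25/24)*t^2) : A ≤ 2*t^2 := by nlinarith [sq_nonneg t]

lemma hw_ge (s t A B : ℝ) (ht : 0 < t) (hs : 2.4 ≤ s) (h2D : 2*(2*s*t) ≤ B + A)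
    (hc : B < (24/5)*t) : (24/5)*t ≤ A := by nlinarith

lemma hw_im2 (x s t : ℝ) (ht : 0 < t) (htS : t < 1/100000) (hs : 2.4 ≤ s)
    (hx : 2*s*t - (25/24)*t^2 ≤ x) : 0 < x := by nlinarith

lemma hw_sum9 (A B s t : ℝ) (ht : 0 < t) (htS : t < 1/100000)
    (h2D : 2*(2*s*t) ≤ B + A) (hA : A ≤ 2*t^2) (hs : 2.4 ≤ s) : 9*t ≤ B := by nlinarith

lemma hw_Dbnd (s t : ℝ) (ht : 0 < t) (h1 : 2.4 ≤ s) (h2 : s ≤ 2.5) :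
    (24/5)*t ≤ 2*s*t ∧ 2*s*t ≤ 5*t := by constructor <;> nlinarith

lemma hw_e4 (x t : ℝ) (ht : 0 < t) (hx : x ≤ 5*t) (hx0 : 0 ≤ x) :
    22/2625*t^4*x ≤ t^5 := by nlinarith [pow_pos ht 4]

lemma hw_div105 (x t : ℝ) (ht : 0 < t) (hx : x ≤ 5*t) (hx0 : 0 ≤ x) :
    t^2 * x / 105 ≤ t^3 := by nlinarith [pow_pos ht 2]

lemma hw_im0 (a b : ℝ) (ha : 0 < a) (hb : b < 0) : a*b + b*a < 0 := by nlinarith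

lemma hw_mul55 (x y t : ℝ) (hx : x ≤ 5*t) (hy : y ≤ 5*t) (hx0 : 0 ≤ x) (hy0 : 0 ≤ y) :
    x*y ≤ 25*t^2 := by nlinarith

lemma hw_mul56 (x y t : ℝ) (hx : x ≤ 5*t) (hy : y ≤ 6*t) (hx0 : 0 ≤ x) (hy0 : 0 ≤ y) :
    x*y ≤ 30*t^2 := by nlinarith

lemma hw_cube (x y t : ℝ) (ht : 0 ≤ t) (hx : x ≤ 5*t) (hy : y ≤ 5*t) (hx0 : 0 ≤ x) (hy0 : 0 ≤ y) :
    x^3 ≤ 125*t^3 ∧ x^2*y ≤ 125*t^3 ∧ x*y^2 ≤ 125*t^3 ∧ y^3 ≤ 125*t^3 := by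
  refine ⟨?_, ?_, ?_, ?_⟩
  · calc x^3 ≤ (5*t)^3 := pow_le_pow_left₀ hx0 hx 3
      _ = 125*t^3 := by ring
  · calc x^2*y ≤ (5*t)^2*(5*t) :=
        mul_le_mul (pow_le_pow_left₀ hx0 hx 2) hy hy0 (by positivity)
      _ = 125*t^3 := by ring
  · calc x*y^2 ≤ (5*t)*(5*t)^2 :=
        mul_le_mul hx (pow_le_pow_left₀ hy0 hy 2) (by positivity) (by positivity)
      _ = 125*t^3 := by ring
  · calc y^3 ≤ (5*t)^3 := pow_le_pow_left₀ hy0 hy 3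
      _ = 125*t^3 := by ring

lemma hw_tpow (t : ℝ) (ht : 0 < t) (htS : t < 1/100000) :
    t^4 ≤ t^3 * (1/100000) ∧ t^5 ≤ t^3 * (1/100000)^2 ∧ t^5 ≤ t^4 * (1/100000)
      ∧ t^6 ≤ t^5 * (1/100000) ∧ t^2 ≤ t * (1/100000) ∧ t^3 ≤ t^2 * (1/100000) := by
  have h1 : 0 < t^2 := by positivity
  have h2 : 0 < t^3 := by positivity
  have h3 : 0 < t^4 := by positivity
  have h4 : 0 < t^5 := by positivity
  refine ⟨?_, ?_, ?_, ?_, ?_, ?_⟩ <;> nlinarith [mul_lt_mul_of_pos_left htS h1,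
    mul_lt_mul_of_pos_left htS h2, mul_lt_mul_of_pos_left htS h3,
    mul_lt_mul_of_pos_left htS h4, mul_lt_mul_of_pos_left htS ht]

/- ### Taylor remainder for cosh -/

lemma hw_cosh_taylor (z : ℂ) (hz : Complex.abs z ≤ 1) :
    Complex.abs (Complex.cosh z - (1 + z^2/2 + z^4/24 + z^6/720 + z^8/40320))
      ≤ Complex.abs z ^ 10 := by
  have h1 := Complex.exp_bound hz (n := 10) (by norm_num)
  change Complex.abs _ ≤ Complex.abs z ^ 10 * _ at h1
  have hz' : Complex.abs (-z) ≤ 1 := by rwa [map_neg_eq_map]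
  have h2 := Complex.exp_bound hz' (n := 10) (by norm_num)
  change Complex.abs _ ≤ Complex.abs (-z) ^ 10 * _ at h2
  rw [map_neg_eq_map] at h2
  have hS : (∑ m ∈ range 10, z ^ m / m.factorial) + (∑ m ∈ range 10, (-z) ^ m / m.factorial)
      = 2 * (1 + z^2/2 + z^4/24 + z^6/720 + z^8/40320) := by
    norm_num [Finset.sum_range_succ, Nat.factorial]
    ring
  have hid : Complex.cosh z - (1 + z^2/2 + z^4/24 + z^6/720 + z^8/40320)
      = ((Complex.exp z - ∑ m ∈ range 10, z ^ m / m.factorial)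
        + (Complex.exp (-z) - ∑ m ∈ range 10, (-z) ^ m / m.factorial)) / 2 := by
    rw [show Complex.cosh z = (Complex.exp z + Complex.exp (-z)) / 2 from rfl]
    rw [eq_div_iff (by norm_num : (2:ℂ) ≠ 0)]
    linear_combination hS
  rw [hid]
  have hXnn : (0:ℝ) ≤ Complex.abs z ^ 10 := pow_nonneg (Complex.abs.nonneg z) 10
  have hb : Complex.abs z ^ 10 * ((Nat.succ 10 : ℝ) * ((Nat.factorial 10) * 10 : ℝ)⁻¹)
      ≤ Complex.abs z ^ 10 / 2 := by
    have hf : ((Nat.factorial 10 : ℕ) : ℝ) = 3628800 := by norm_num [Nat.factorial]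
    rw [hf]
    norm_num
    nlinarith [hXnn]
  calc Complex.abs (((Complex.exp z - ∑ m ∈ range 10, z ^ m / m.factorial)
        + (Complex.exp (-z) - ∑ m ∈ range 10, (-z) ^ m / m.factorial)) / 2)
      ≤ (Complex.abs (Complex.exp z - ∑ m ∈ range 10, z ^ m / m.factorial)
        + Complex.abs (Complex.exp (-z) - ∑ m ∈ range 10, (-z) ^ m / m.factorial)) / 2 := by
        rw [map_div₀, Complex.abs_two]
        gcongr
        exact Complex.abs.add_le _ _
    _ ≤ Complex.abs z ^ 10 := by
        have e1 := h1.trans hb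
        have e2 := h2.trans hb
        linarith

/- ### Main theorem -/

set_option maxHeartbeats 1000000 in
/-- Small-`τ` inversion of the steepest descent phase equation (for `ρ = 1`). -/
theorem zeta_sq_small_tau_inversion :
    ∃ ε > (0 : ℝ), ∃ C > (0 : ℝ), ∀ ζ : ℂ, ∀ τ : ℝ,
      0 < ‖ζ‖ → ‖ζ‖ < ε → 0 < ζ.re → ζ.im < 0 → 0 < τ →
      ζ ^ 2 / 2 - Complex.cosh ζ + 1 = (τ : ℂ) →
      ‖(ζ ^ 2 -
          (-(2 * Real.sqrt 6) * Complex.I * (τ : ℂ) ^ ((1 : ℂ) / 2)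
            + (2 / 5) * (τ : ℂ)
            + (2 / 35) * (Real.sqrt (2 / 3) : ℂ) * Complex.I * (τ : ℂ) ^ ((3 : ℂ) / 2)))‖
        ≤ C * τ ^ 2 := by
  refine ⟨1/200, by norm_num, 100000, by norm_num, ?_⟩
  intro ζ τ h0 hε hre him hτ heq
  change 0 < Complex.abs ζ at h0
  change Complex.abs ζ < 1/200 at hε
  change Complex.abs _ ≤ _
  obtain ⟨t, htdef⟩ : ∃ t, t = Real.sqrt τ := ⟨_, rfl⟩
  have ht : 0 < t := htdef ▸ Real.sqrt_pos.mpr hτ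
  have ht2 : t^2 = τ := htdef ▸ Real.sq_sqrt hτ.le
  have h6ge := hw_sqrt6.1
  have h6le := hw_sqrt6.2
  have h6 : (Real.sqrt 6)^2 = 6 := Real.sq_sqrt (by norm_num)
  obtain ⟨w, hwdef⟩ : ∃ w : ℂ, w = ζ^2 := ⟨_, rfl⟩
  obtain ⟨D, hDdef⟩ : ∃ D : ℂ, D = ((-(2*Real.sqrt 6*t) : ℝ) : ℂ) * Complex.I := ⟨_, rfl⟩
  obtain ⟨W, hWdef⟩ : ∃ W, W = Complex.abs w := ⟨_, rfl⟩
  obtain ⟨ρ, hρdef⟩ : ∃ ρ : ℂ, ρ = Complex.cosh ζ - (1 + ζ^2/2 + ζ^4/24 + ζ^6/720 + ζ^8/40320) :=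
    ⟨_, rfl⟩
  have hWζ : W = Complex.abs ζ ^ 2 := by rw [hWdef, hwdef, map_pow]
  have hW0 : 0 < W := by rw [hWζ]; positivity
  have hWs : W < 1/40000 := by rw [hWζ]; exact hw_sq_small _ (Complex.abs.nonneg ζ) hε
  have hρbd : Complex.abs ρ ≤ W^5 := by
    rw [hρdef]
    calc Complex.abs _ ≤ Complex.abs ζ ^ 10 := hw_cosh_taylor ζ (by linarith)
      _ = W^5 := by rw [hWζ]; ring
  have hE : w^2 + w^3/30 + w^4/1680 + 24*ρ = -24*(τ:ℂ) := by
    rw [hρdef, hwdef]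
    linear_combination (-24 : ℂ) * heq
  have hct : ((t:ℝ):ℂ)^2 = (τ:ℂ) := by rw [← Complex.ofReal_pow, ht2]
  have hc6 : ((Real.sqrt 6 : ℝ):ℂ)^2 = 6 := by rw [← Complex.ofReal_pow, h6]; norm_num
  have hDsq : D^2 = -24*(τ:ℂ) := by
    rw [hDdef]
    push_cast
    linear_combination (4 * Complex.I^2 * ((t:ℝ):ℂ)^2) * hc6
      + (24 * ((t:ℝ):ℂ)^2) * Complex.I_sq - 24 * hct
  have hDabs : Complex.abs D = 2*Real.sqrt 6*t := by
    rw [hDdef, map_mul, Complex.abs_ofReal, Complex.abs_I, mul_one, abs_neg]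
    exact abs_of_nonneg (by positivity)
  have hDle : Complex.abs D ≤ 5*t := by rw [hDabs]; exact (hw_Dbnd _ t ht h6ge h6le).2
  have hDge : (24/5)*t ≤ Complex.abs D := by rw [hDabs]; exact (hw_Dbnd _ t ht h6ge h6le).1
  have habsτ : Complex.abs ((τ:ℂ)) = t^2 := by
    rw [Complex.abs_ofReal, abs_of_pos hτ, ← ht2]
  have habsτ2 : Complex.abs ((τ:ℂ)^2) = t^4 := by rw [map_pow, habsτ]; ring
  have habsτ3 : Complex.abs ((τ:ℂ)^3) = t^6 := by rw [map_pow, habsτ]; ring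
  have habs3 : Complex.abs (w^3/30 + w^4/1680 + 24*ρ) ≤ W^3/30 + W^4/1680 + 24*W^5 := by
    have e1 : Complex.abs (w^3/30) = W^3/30 := by
      rw [map_div₀, map_pow, ← hWdef]; norm_num
    have e2 : Complex.abs (w^4/1680) = W^4/1680 := by
      rw [map_div₀, map_pow, ← hWdef]; norm_num
    have e3 : Complex.abs (24*ρ) ≤ 24*W^5 := by
      rw [map_mul]
      calc Complex.abs (24:ℂ) * Complex.abs ρ = 24 * Complex.abs ρ := by norm_num
        _ ≤ 24*W^5 := by linarith
    calc Complex.abs (w^3/30 + w^4/1680 + 24*ρ)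
        ≤ Complex.abs (w^3/30 + w^4/1680) + Complex.abs (24*ρ) := hw_habs_add _ _
      _ ≤ Complex.abs (w^3/30) + Complex.abs (w^4/1680) + Complex.abs (24*ρ) := by
          linarith [hw_habs_add (w^3/30) (w^4/1680)]
      _ ≤ W^3/30 + W^4/1680 + 24*W^5 := by rw [e1, e2]; linarith
  have hSmall := hw_small W hW0 hWs
  have habs24 : Complex.abs (w^2 + w^3/30 + w^4/1680 + 24*ρ) = 24*τ := by
    rw [hE, show (-24*(τ:ℂ)) = ((-(24*τ) : ℝ) : ℂ) by push_cast; ring,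
      Complex.abs_ofReal, abs_neg, abs_of_pos (by positivity)]
  have hWub : W ≤ 5*t := by
    have h := Complex.abs.add_le (w^2 + w^3/30 + w^4/1680 + 24*ρ) (-(w^3/30 + w^4/1680 + 24*ρ))
    rw [show (w^2 + w^3/30 + w^4/1680 + 24*ρ) + -(w^3/30 + w^4/1680 + 24*ρ) = w^2 by ring,
      map_neg_eq_map, habs24, map_pow, ← hWdef] at h
    exact hw_Wub W t hW0 ht (by rw [← ht2] at h; linarith)
  have hWlb : 4*t ≤ W := by
    have h := Complex.abs.add_le (w^2) (w^3/30 + w^4/1680 + 24*ρ)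
    rw [show w ^ 2 + (w ^ 3 / 30 + w ^ 4 / 1680 + 24 * ρ)
        = w ^ 2 + w ^ 3 / 30 + w ^ 4 / 1680 + 24 * ρ from by ring,
      habs24, map_pow, ← hWdef] at h
    exact hw_Wlb W t hW0 ht (by rw [← ht2] at h; linarith)
  have htS : t < 1/100000 := by linarith
  obtain ⟨ht4, ht5, ht5', ht6, htq, htc⟩ := hw_tpow t ht htS
  have hW2 : W^2 ≤ 25*t^2 := by
    calc W^2 ≤ (5*t)^2 := pow_le_pow_left₀ hW0.le hWub 2
      _ = 25*t^2 := by ring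
  have hW3 : W^3 ≤ 125*t^3 := by
    calc W^3 ≤ (5*t)^3 := pow_le_pow_left₀ hW0.le hWub 3
      _ = 125*t^3 := by ring
  have hW4 : W^4 ≤ 625*t^4 := by
    calc W^4 ≤ (5*t)^4 := pow_le_pow_left₀ hW0.le hWub 4
      _ = 625*t^4 := by ring
  have hW5 : W^5 ≤ 3125*t^5 := by
    calc W^5 ≤ (5*t)^5 := pow_le_pow_left₀ hW0.le hWub 5
      _ = 3125*t^5 := by ring
  -- step 1 : |w - D| ≤ 2t²
  have hprod : Complex.abs (w - D) * Complex.abs (w + D) ≤ 5*t^3 := by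
    have hprodeq : (w - D) * (w + D) = -(w^3/30 + w^4/1680 + 24*ρ) := by
      linear_combination hE - hDsq
    rw [← map_mul, hprodeq, map_neg_eq_map]
    exact habs3.trans (hw_chain W t hW0 hWs ht hW3)
  have hIm : w.im < 0 := by
    rw [hwdef, pow_two, Complex.mul_im]
    exact hw_im0 _ _ hre him
  have hDim : D.im = -(2*Real.sqrt 6*t) := by rw [hDdef]; simp
  have h2D : 2*(2*Real.sqrt 6*t) ≤ Complex.abs (w + D) + Complex.abs (w - D) := by
    have h := Complex.abs.add_le (w + D) (-(w - D))
    rw [show (w + D) + -(w - D) = 2*D by ring, map_neg_eq_map, map_mul] at h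
    have e : Complex.abs (2:ℂ) * Complex.abs D = 2*(2*Real.sqrt 6*t) := by
      rw [hDabs, Complex.abs_two]
    linarith [e ▸ h]
  have hwD : Complex.abs (w - D) ≤ 2*t^2 := by
    rcases le_or_gt ((24/5)*t) (Complex.abs (w + D)) with hc | hc
    · exact hw_2t _ t (hw_div1 _ _ t ht (Complex.abs.nonneg _) hprod hc)
    · exfalso
      have hge : (24/5)*t ≤ Complex.abs (w - D) :=
        hw_ge (Real.sqrt 6) t _ _ ht h6ge h2D hc
      have hBs : Complex.abs (w + D) ≤ (25/24)*t^2 := by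
        refine hw_div1 _ _ t ht (Complex.abs.nonneg _) ?_ hge
        rw [mul_comm]; exact hprod
      have himle : |(w + D).im| ≤ Complex.abs (w + D) := Complex.abs_im_le_norm (w + D)
      have haddim : (w + D).im = w.im + D.im := Complex.add_im w D
      rw [hDim] at haddim
      have h1 : 2*Real.sqrt 6*t - (25/24)*t^2 ≤ w.im := by
        have := neg_abs_le (w + D).im
        linarith
      exact absurd (hw_im2 _ _ t ht htS h6ge h1) (by linarith)
  have hsum9 : 9*t ≤ Complex.abs (w + D) :=
    hw_sum9 (Complex.abs (w - D)) _ (Real.sqrt 6) t ht htS h2D hwD h6ge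
  -- step 2 : |w - P2| ≤ t³
  obtain ⟨P2, hP2def⟩ : ∃ P2 : ℂ, P2 = D + (2/5)*(τ:ℂ) := ⟨_, rfl⟩
  have hD3 : D^3 = -24*(τ:ℂ)*D := by rw [pow_succ, hDsq]
  have hkey2 : w^2 - P2^2 = -((w^3 - D^3)/30) - w^4/1680 - 24*ρ - (4/25)*(τ:ℂ)^2 := by
    rw [hP2def]
    linear_combination hE - hDsq - (1/30)*hD3
  have hcube : Complex.abs (w^3 - D^3) ≤ 150*t^4 := by
    rw [show w^3 - D^3 = (w - D)*(w^2 + w*D + D^2) from by ring, map_mul]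
    have e1 : Complex.abs (w^2) ≤ 25*t^2 := by rw [map_pow, ← hWdef]; exact hW2
    have e2 : Complex.abs (w*D) ≤ 25*t^2 := by
      rw [map_mul, ← hWdef]
      exact hw_mul55 _ _ t hWub hDle hW0.le (Complex.abs.nonneg D)
    have e3 : Complex.abs (D^2) ≤ 25*t^2 := by
      rw [hDsq, show (-24*(τ:ℂ)) = ((-(24*τ) : ℝ) : ℂ) by push_cast; ring,
        Complex.abs_ofReal, abs_neg, abs_of_pos (by positivity), ← ht2]
      linarith [sq_nonneg t]
    have h2 : Complex.abs (w^2 + w*D + D^2) ≤ 75*t^2 := by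
      calc Complex.abs (w^2 + w*D + D^2)
          ≤ Complex.abs (w^2 + w*D) + Complex.abs (D^2) := hw_habs_add _ _
        _ ≤ Complex.abs (w^2) + Complex.abs (w*D) + Complex.abs (D^2) := by
            linarith [hw_habs_add (w^2) (w*D)]
        _ ≤ 75*t^2 := by linarith
    calc Complex.abs (w - D) * Complex.abs (w^2 + w*D + D^2) ≤ (2*t^2) * (75*t^2) :=
          mul_le_mul hwD h2 (Complex.abs.nonneg _) (by positivity)
      _ = 150*t^4 := by ring
  have habsP2sq : Complex.abs (w^2 - P2^2) ≤ 7*t^4 := by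
    rw [hkey2]
    have e1 : Complex.abs (-((w^3 - D^3)/30)) ≤ 5*t^4 := by
      rw [map_neg_eq_map, map_div₀, show Complex.abs (30:ℂ) = 30 by norm_num]
      linarith
    have e2 : Complex.abs (w^4/1680) ≤ (2/5)*t^4 := by
      rw [map_div₀, map_pow, ← hWdef, show Complex.abs (1680:ℂ) = 1680 by norm_num]
      linarith [pow_pos ht 4]
    have e3 : Complex.abs (24*ρ) ≤ (4/5)*t^4 := by
      rw [map_mul, show Complex.abs (24:ℂ) = 24 by norm_num]
      have : 24 * Complex.abs ρ ≤ 24 * (3125*t^5) := by linarith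
      linarith [pow_pos ht 4]
    have e4 : Complex.abs ((4/25)*(τ:ℂ)^2) ≤ (1/5)*t^4 := by
      rw [map_mul, habsτ2, show Complex.abs ((4/25 : ℂ)) = 4/25 by norm_num]
      linarith [pow_pos ht 4]
    calc Complex.abs (-((w^3 - D^3)/30) - w^4/1680 - 24*ρ - (4/25)*(τ:ℂ)^2)
        ≤ Complex.abs (-((w^3 - D^3)/30) - w^4/1680 - 24*ρ) + Complex.abs ((4/25)*(τ:ℂ)^2) :=
          hw_habs_sub _ _
      _ ≤ Complex.abs (-((w^3 - D^3)/30) - w^4/1680) + Complex.abs (24*ρ)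
            + Complex.abs ((4/25)*(τ:ℂ)^2) := by
          linarith [hw_habs_sub (-((w^3 - D^3)/30) - w^4/1680) (24*ρ)]
      _ ≤ Complex.abs (-((w^3 - D^3)/30)) + Complex.abs (w^4/1680) + Complex.abs (24*ρ)
            + Complex.abs ((4/25)*(τ:ℂ)^2) := by
          linarith [hw_habs_sub (-((w^3 - D^3)/30)) (w^4/1680)]
      _ ≤ 7*t^4 := by linarith [pow_pos ht 4]
  have habsτc : Complex.abs ((2/5)*(τ:ℂ)) = (2/5)*t^2 := by
    rw [map_mul, habsτ, show Complex.abs ((2/5 : ℂ)) = 2/5 by norm_num]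
  have hP2abs : Complex.abs P2 ≤ 6*t := by
    rw [hP2def]
    calc Complex.abs (D + (2/5)*(τ:ℂ)) ≤ Complex.abs D + Complex.abs ((2/5)*(τ:ℂ)) :=
          hw_habs_add _ _
      _ = Complex.abs D + (2/5)*t^2 := by rw [habsτc]
      _ ≤ 6*t := by linarith
  have hP2sum : 8*t ≤ Complex.abs (w + P2) := by
    have h := Complex.abs.add_le (w + P2) (-((2/5)*(τ:ℂ)))
    rw [show (w + P2) + -((2/5)*(τ:ℂ)) = w + D by rw [hP2def]; ring,
      map_neg_eq_map, habsτc] at h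
    linarith
  have hstep2 : Complex.abs (w - P2) ≤ t^3 := by
    refine hw_div2 _ _ t ht (Complex.abs.nonneg _) ?_ hP2sum
    rw [← map_mul, show (w - P2)*(w + P2) = w^2 - P2^2 from by ring]
    exact habsP2sq
  -- step 3 : |w - P3| ≤ 12000 t⁴
  obtain ⟨P3, hP3def⟩ : ∃ P3 : ℂ, P3 = P2 - (τ:ℂ)*D/105 := ⟨_, rfl⟩
  have hP2cube : P2^3 = -24*(τ:ℂ)*D - (144/5)*(τ:ℂ)^2 + (12/25)*(τ:ℂ)^2*D
      + (8/125)*(τ:ℂ)^3 := by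
    rw [hP2def]
    linear_combination (D + (6/5)*(τ:ℂ)) * hDsq
  have hD4 : D^4 = 576*(τ:ℂ)^2 := by
    linear_combination (D^2 - 24*(τ:ℂ)) * hDsq
  have hP3sq : P3^2 = -24*(τ:ℂ) + (108/175)*(τ:ℂ)^2 - (24/11025)*(τ:ℂ)^3
      + (4/5)*(τ:ℂ)*D - (4/525)*(τ:ℂ)^2*D := by
    rw [hP3def, hP2def]
    linear_combination (1 + (1/11025)*(τ:ℂ)^2 - (2/105)*(τ:ℂ)) * hDsq
  have hkey3 : w^2 - P3^2 = -((w^3 - P2^3)/30) - ((w^4 - D^4)/1680) - 24*ρ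
      - (22/2625)*(τ:ℂ)^2*D + (24/11025)*(τ:ℂ)^3 - (4/1875)*(τ:ℂ)^3 := by
    linear_combination hE - hP3sq - (1/30)*hP2cube - (1/1680)*hD4
  have hcube2 : Complex.abs (w^3 - P2^3) ≤ 91*t^5 := by
    rw [show w^3 - P2^3 = (w - P2)*(w^2 + w*P2 + P2^2) from by ring, map_mul]
    have e1 : Complex.abs (w^2) ≤ 25*t^2 := by rw [map_pow, ← hWdef]; exact hW2
    have e2 : Complex.abs (w*P2) ≤ 30*t^2 := by
      rw [map_mul, ← hWdef]
      exact hw_mul56 _ _ t hWub hP2abs hW0.le (Complex.abs.nonneg P2)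
    have e3 : Complex.abs (P2^2) ≤ 36*t^2 := by
      rw [map_pow]
      calc Complex.abs P2 ^ 2 ≤ (6*t)^2 := pow_le_pow_left₀ (Complex.abs.nonneg P2) hP2abs 2
        _ = 36*t^2 := by ring
    have h2 : Complex.abs (w^2 + w*P2 + P2^2) ≤ 91*t^2 := by
      calc Complex.abs (w^2 + w*P2 + P2^2)
          ≤ Complex.abs (w^2 + w*P2) + Complex.abs (P2^2) := hw_habs_add _ _
        _ ≤ Complex.abs (w^2) + Complex.abs (w*P2) + Complex.abs (P2^2) := by
            linarith [hw_habs_add (w^2) (w*P2)]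
        _ ≤ 91*t^2 := by linarith
    calc Complex.abs (w - P2) * Complex.abs (w^2 + w*P2 + P2^2) ≤ (t^3) * (91*t^2) :=
          mul_le_mul hstep2 h2 (Complex.abs.nonneg _) (by positivity)
      _ = 91*t^5 := by ring
  have hquart : Complex.abs (w^4 - D^4) ≤ 1000*t^5 := by
    rw [show w^4 - D^4 = (w - D)*(w^3 + w^2*D + w*D^2 + D^3) from by ring, map_mul]
    obtain ⟨c1, c2, c3, c4⟩ := hw_cube W (Complex.abs D) t ht.le hWub hDle hW0.le (Complex.abs.nonneg D)
    have e1 : Complex.abs (w^3) ≤ 125*t^3 := by rw [map_pow, ← hWdef]; exact hW3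
    have e2 : Complex.abs (w^2*D) ≤ 125*t^3 := by rw [map_mul, map_pow, ← hWdef]; exact c2
    have e3 : Complex.abs (w*D^2) ≤ 125*t^3 := by rw [map_mul, map_pow, ← hWdef]; exact c3
    have e4 : Complex.abs (D^3) ≤ 125*t^3 := by rw [map_pow]; exact c4
    have h2 : Complex.abs (w^3 + w^2*D + w*D^2 + D^3) ≤ 500*t^3 := by
      calc Complex.abs (w^3 + w^2*D + w*D^2 + D^3)
          ≤ Complex.abs (w^3 + w^2*D + w*D^2) + Complex.abs (D^3) := hw_habs_add _ _
        _ ≤ Complex.abs (w^3 + w^2*D) + Complex.abs (w*D^2) + Complex.abs (D^3) := by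
            linarith [hw_habs_add (w^3 + w^2*D) (w*D^2)]
        _ ≤ Complex.abs (w^3) + Complex.abs (w^2*D) + Complex.abs (w*D^2)
              + Complex.abs (D^3) := by
            linarith [hw_habs_add (w^3) (w^2*D)]
        _ ≤ 500*t^3 := by linarith
    calc Complex.abs (w - D) * Complex.abs (w^3 + w^2*D + w*D^2 + D^3) ≤ (2*t^2) * (500*t^3) :=
          mul_le_mul hwD h2 (Complex.abs.nonneg _) (by positivity)
      _ = 1000*t^5 := by ring
  have habsP3sq : Complex.abs (w^2 - P3^2) ≤ 80000*t^5 := by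
    rw [hkey3]
    have e1 : Complex.abs (-((w^3 - P2^3)/30)) ≤ 4*t^5 := by
      rw [map_neg_eq_map, map_div₀, show Complex.abs (30:ℂ) = 30 by norm_num]
      linarith [pow_pos ht 5]
    have e2 : Complex.abs ((w^4 - D^4)/1680) ≤ t^5 := by
      rw [map_div₀, show Complex.abs (1680:ℂ) = 1680 by norm_num]
      linarith [pow_pos ht 5]
    have e3 : Complex.abs (24*ρ) ≤ 75000*t^5 := by
      rw [map_mul, show Complex.abs (24:ℂ) = 24 by norm_num]
      linarith
    have e4 : Complex.abs ((22/2625)*(τ:ℂ)^2*D) ≤ t^5 := by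
      rw [map_mul, map_mul, habsτ2, show Complex.abs ((22/2625 : ℂ)) = 22/2625 by norm_num]
      exact hw_e4 _ t ht hDle (Complex.abs.nonneg D)
    have e5 : Complex.abs ((24/11025)*(τ:ℂ)^3) ≤ t^5 := by
      rw [map_mul, habsτ3, show Complex.abs ((24/11025 : ℂ)) = 24/11025 by norm_num]
      have h5 : 0 ≤ t^5 := by positivity
      linarith
    have e6 : Complex.abs ((4/1875)*(τ:ℂ)^3) ≤ t^5 := by
      rw [map_mul, habsτ3, show Complex.abs ((4/1875 : ℂ)) = 4/1875 by norm_num]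
      have h5 : 0 ≤ t^5 := by positivity
      linarith
    calc Complex.abs (-((w^3 - P2^3)/30) - ((w^4 - D^4)/1680) - 24*ρ
          - (22/2625)*(τ:ℂ)^2*D + (24/11025)*(τ:ℂ)^3 - (4/1875)*(τ:ℂ)^3)
        ≤ Complex.abs (-((w^3 - P2^3)/30) - ((w^4 - D^4)/1680) - 24*ρ
            - (22/2625)*(τ:ℂ)^2*D + (24/11025)*(τ:ℂ)^3) + Complex.abs ((4/1875)*(τ:ℂ)^3) :=
          hw_habs_sub _ _
      _ ≤ Complex.abs (-((w^3 - P2^3)/30) - ((w^4 - D^4)/1680) - 24*ρ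
            - (22/2625)*(τ:ℂ)^2*D) + Complex.abs ((24/11025)*(τ:ℂ)^3)
            + Complex.abs ((4/1875)*(τ:ℂ)^3) := by
          linarith [hw_habs_add (-((w^3 - P2^3)/30) - ((w^4 - D^4)/1680) - 24*ρ
            - (22/2625)*(τ:ℂ)^2*D) ((24/11025)*(τ:ℂ)^3)]
      _ ≤ Complex.abs (-((w^3 - P2^3)/30) - ((w^4 - D^4)/1680) - 24*ρ)
            + Complex.abs ((22/2625)*(τ:ℂ)^2*D) + Complex.abs ((24/11025)*(τ:ℂ)^3)
            + Complex.abs ((4/1875)*(τ:ℂ)^3) := by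
          linarith [hw_habs_sub (-((w^3 - P2^3)/30) - ((w^4 - D^4)/1680) - 24*ρ)
            ((22/2625)*(τ:ℂ)^2*D)]
      _ ≤ Complex.abs (-((w^3 - P2^3)/30) - ((w^4 - D^4)/1680)) + Complex.abs (24*ρ)
            + Complex.abs ((22/2625)*(τ:ℂ)^2*D) + Complex.abs ((24/11025)*(τ:ℂ)^3)
            + Complex.abs ((4/1875)*(τ:ℂ)^3) := by
          linarith [hw_habs_sub (-((w^3 - P2^3)/30) - ((w^4 - D^4)/1680)) (24*ρ)]
      _ ≤ Complex.abs (-((w^3 - P2^3)/30)) + Complex.abs ((w^4 - D^4)/1680)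
            + Complex.abs (24*ρ) + Complex.abs ((22/2625)*(τ:ℂ)^2*D)
            + Complex.abs ((24/11025)*(τ:ℂ)^3) + Complex.abs ((4/1875)*(τ:ℂ)^3) := by
          linarith [hw_habs_sub (-((w^3 - P2^3)/30)) ((w^4 - D^4)/1680)]
      _ ≤ 80000*t^5 := by linarith [pow_pos ht 5]
  have hP3sum : 7*t ≤ Complex.abs (w + P3) := by
    have h := Complex.abs.add_le (w + P3) ((τ:ℂ)*D/105)
    rw [show (w + P3) + (τ:ℂ)*D/105 = w + P2 by rw [hP3def]; ring] at h
    have e : Complex.abs ((τ:ℂ)*D/105) ≤ t^3 := by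
      rw [map_div₀, map_mul, habsτ, show Complex.abs (105:ℂ) = 105 by norm_num]
      exact hw_div105 _ t ht hDle (Complex.abs.nonneg D)
    linarith
  have hstep3 : Complex.abs (w - P3) ≤ 12000*t^4 := by
    refine hw_div3 _ _ t ht (Complex.abs.nonneg _) ?_ hP3sum
    rw [← map_mul, show (w - P3)*(w + P3) = w^2 - P3^2 from by ring]
    exact habsP3sq
  -- final conversion
  have hc1 : (τ:ℂ) ^ ((1:ℂ)/2) = ((t:ℝ):ℂ) := by
    rw [show ((1:ℂ)/2) = ((1/2 : ℝ):ℂ) by norm_num, ← Complex.ofReal_cpow hτ.le]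
    have e : τ ^ (1/2:ℝ) = t := by rw [htdef, Real.sqrt_eq_rpow]
    rw [e]
  have hc3 : (τ:ℂ) ^ ((3:ℂ)/2) = ((t:ℝ):ℂ)^3 := by
    rw [show ((3:ℂ)/2) = ((3/2 : ℝ):ℂ) by norm_num, ← Complex.ofReal_cpow hτ.le]
    have e : τ ^ (3/2:ℝ) = t^3 := by
      rw [show (3/2:ℝ) = (1/2)*3 by norm_num, Real.rpow_mul hτ.le,
        ← Real.sqrt_eq_rpow, ← htdef, show (3:ℝ) = ((3:ℕ):ℝ) by norm_num, Real.rpow_natCast]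
    rw [e]; push_cast; ring
  have h23 : Real.sqrt (2/3) = Real.sqrt 6 / 3 := by
    have h9 : Real.sqrt 9 = 3 := by
      rw [show (9:ℝ) = 3^2 by norm_num, Real.sqrt_sq (by norm_num : (0:ℝ) ≤ 3)]
    rw [show (2/3:ℝ) = 6/9 by norm_num, Real.sqrt_div (by norm_num : (0:ℝ) ≤ 6), h9]
  rw [hc1, hc3]
  have hfin : Complex.abs (w - P3) ≤ 100000 * τ^2 := by
    have e : t^4 = τ^2 := by rw [← ht2]; ring
    rw [← e]
    linarith [pow_pos ht 4]
  calc Complex.abs (ζ ^ 2 - (-(2 * Real.sqrt 6) * Complex.I * ((t:ℝ):ℂ)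
        + (2 / 5) * (τ : ℂ) + (2 / 35) * (Real.sqrt (2 / 3) : ℂ) * Complex.I * ((t:ℝ):ℂ)^3))
      = Complex.abs (w - P3) := by
        congr 1
        rw [hwdef, hP3def, hP2def, hDdef, h23, ← hct]
        push_cast
        ring
    _ ≤ 100000 * τ^2 := hfin
end

section
/- For every ρ > 1 there exists a unique y₁ ∈ (0, π) such that y₁ + ρ·sin y₁ = π; moreover this y₁ satisfies 1 + ρ·cos y₁ > 0. -/
open Real

/-- For `ρ > 1` there is a unique `y₁ ∈ (0, π)` with `y₁ + ρ sin y₁ = π`, and it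
satisfies `1 + ρ cos y₁ > 0`. -/
theorem exists_unique_saddle_y1 (ρ : ℝ) (hρ : 1 < ρ) :
    (∃! y : ℝ, (0 < y ∧ y < π) ∧ y + ρ * Real.sin y = π) ∧
      ∀ y : ℝ, 0 < y → y < π → y + ρ * Real.sin y = π → 0 < 1 + ρ * Real.cos y := by
  have hρ0 : (0:ℝ) < ρ := lt_trans one_pos hρ
  set c : ℝ := -ρ⁻¹ with hc
  have hinv0 : 0 < ρ⁻¹ := inv_pos.mpr hρ0
  have hinv1 : ρ⁻¹ < 1 := inv_lt_one_of_one_lt₀ hρ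
  have hc1 : (-1:ℝ) < c := by simp [hc]; linarith
  have hc2 : c < 1 := by simp [hc]; linarith
  have hρc : ρ * c = -1 := by rw [hc]; field_simp
  set y₂ : ℝ := Real.arccos c with hy₂
  have hy₂0 : 0 < y₂ := Real.arccos_pos.mpr hc2
  have hy₂π : y₂ < π := by
    rcases lt_or_eq_of_le (Real.arccos_le_pi c) with h | h
    · exact h
    · exact absurd (Real.arccos_eq_pi.mp h) (by linarith)
  have hcos : Real.cos y₂ = c := Real.cos_arccos hc1.le hc2.le
  set f : ℝ → ℝ := fun y => y + ρ * Real.sin y with hf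
  have hderiv : ∀ y : ℝ, HasDerivAt f (1 + ρ * Real.cos y) y := fun y => by
    exact (hasDerivAt_id' y).add ((Real.hasDerivAt_sin y).const_mul ρ)
  have hcont : Continuous f := by
    fun_prop
  -- on [0, y₂] the derivative is positive, f strictly mono
  have hmono : StrictMonoOn f (Set.Icc 0 y₂) := by
    apply strictMonoOn_of_deriv_pos (convex_Icc 0 y₂) (hcont.continuousOn)
    intro x hx
    rw [interior_Icc] at hx
    rw [(hderiv x).deriv]
    have : Real.cos y₂ < Real.cos x :=
      Real.strictAntiOn_cos ⟨hx.1.le, (hx.2.trans hy₂π).le⟩ ⟨hy₂0.le, Real.arccos_le_pi c⟩ hx.2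
    rw [hcos] at this
    have : c < Real.cos x := this
    linarith [mul_lt_mul_of_pos_left this hρ0, hρc]
  -- on [y₂, π] the derivative is negative, f strictly anti
  have hanti : StrictAntiOn f (Set.Icc y₂ π) := by
    apply strictAntiOn_of_deriv_neg (convex_Icc y₂ π) (hcont.continuousOn)
    intro x hx
    rw [interior_Icc] at hx
    rw [(hderiv x).deriv]
    have : Real.cos x < Real.cos y₂ :=
      Real.strictAntiOn_cos ⟨hy₂0.le, Real.arccos_le_pi c⟩ ⟨(hy₂0.trans hx.1).le, hx.2.le⟩ hx.1
    rw [hcos] at this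
    linarith [mul_lt_mul_of_pos_left this hρ0, hρc]
  have hfπ : f π = π := by simp [hf]
  have hfy₂ : π < f y₂ := by
    have := hanti (Set.left_mem_Icc.mpr hy₂π.le) (Set.right_mem_Icc.mpr hy₂π.le) hy₂π
    rwa [hfπ] at this
  have hf0 : f 0 = 0 := by simp [hf]
  -- every solution in (0,π) lies in (0, y₂)
  have hkey : ∀ y : ℝ, 0 < y → y < π → f y = π → y < y₂ := by
    intro y hy0 hyπ hy
    by_contra h
    push_neg at h
    have := hanti (Set.mem_Icc.mpr ⟨h, hyπ.le⟩) (Set.right_mem_Icc.mpr hy₂π.le) hyπ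
    rw [hfπ, hy] at this
    exact lt_irrefl _ this
  constructor
  · -- existence via IVT on [0, y₂]
    have hIVT : ∃ y ∈ Set.Icc (0:ℝ) y₂, f y = π := by
      apply intermediate_value_Icc hy₂0.le (hcont.continuousOn)
      rw [hf0]
      exact ⟨Real.pi_pos.le, hfy₂.le⟩
    obtain ⟨y, ⟨hy0, hyy₂⟩, hy⟩ := hIVT
    have hy0' : 0 < y := by
      rcases lt_or_eq_of_le hy0 with h | h
      · exact h
      · exfalso; rw [← h, hf0] at hy; exact Real.pi_ne_zero hy.symm
    have hyπ : y < π := lt_of_le_of_lt hyy₂ hy₂π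
    refine ⟨y, ⟨⟨hy0', hyπ⟩, hy⟩, ?_⟩
    rintro z ⟨⟨hz0, hzπ⟩, hz⟩
    have hzy₂ : z < y₂ := hkey z hz0 hzπ hz
    have hyy₂' : y < y₂ := hkey y hy0' hyπ hy
    exact hmono.injOn (Set.mem_Icc.mpr ⟨hz0.le, hzy₂.le⟩)
      (Set.mem_Icc.mpr ⟨hy0, hyy₂'.le⟩) (hz.trans hy.symm)
  · intro y hy0 hyπ hy
    have hyy₂ : y < y₂ := hkey y hy0 hyπ hy
    have : Real.cos y₂ < Real.cos y :=
      Real.strictAntiOn_cos ⟨hy0.le, hyπ.le⟩ ⟨hy₂0.le, Real.arccos_le_pi c⟩ hyy₂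
    rw [hcos] at this
    linarith [mul_lt_mul_of_pos_left this hρ0, hρc]
end

section
/- For every real τ > 0 there exists a unique ζ ∈ ℂ with Re ζ > 0 and −π < Im ζ < 0 such that ζ²/2 − cosh ζ + 1 = τ. -/
open Real Complex


lemma key1 {s : ℝ} (hs : s ∈ Set.Ioo 0 π) : s * Real.cos s < Real.sin s := by
  have H : StrictMonoOn (fun t => Real.sin t - t * Real.cos t) (Set.Icc 0 π) := by
    apply strictMonoOn_of_deriv_pos (convex_Icc 0 π)
    · exact (Real.continuous_sin.sub (continuous_id.mul Real.continuous_cos)).continuousOn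
    · intro t ht
      rw [interior_Icc] at ht
      have h1 : HasDerivAt (fun t => Real.sin t - t * Real.cos t) (t * Real.sin t) t := by
        have := (Real.hasDerivAt_sin t).sub ((hasDerivAt_id t).mul (Real.hasDerivAt_cos t))
        exact this.congr_deriv (by simp only [id]; ring)
      rw [h1.deriv]
      exact mul_pos ht.1 (Real.sin_pos_of_pos_of_lt_pi ht.1 ht.2)
  have := H (Set.mem_Icc.2 ⟨le_refl 0, Real.pi_pos.le⟩) ⟨hs.1.le, hs.2.le⟩ hs.1
  simp only [Real.sin_zero, Real.cos_zero, Real.sinh_zero, Real.cosh_zero, mul_zero, zero_mul, mul_one, sub_zero, zero_sub] at this; linarith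

lemma key2 {x : ℝ} (hx : 0 < x) : Real.sinh x < x * Real.cosh x := by
  have H : StrictMonoOn (fun t => t * Real.cosh t - Real.sinh t) (Set.Ici 0) := by
    apply strictMonoOn_of_deriv_pos (convex_Ici 0)
    · exact ((continuous_id.mul Real.continuous_cosh).sub Real.continuous_sinh).continuousOn
    · intro t ht
      rw [interior_Ici] at ht
      have h1 : HasDerivAt (fun t => t * Real.cosh t - Real.sinh t) (t * Real.sinh t) t := by
        have := ((hasDerivAt_id t).mul (Real.hasDerivAt_cosh t)).sub (Real.hasDerivAt_sinh t)
        exact this.congr_deriv (by simp only [id]; ring)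
      rw [h1.deriv]
      exact mul_pos ht (Real.sinh_pos_iff.2 ht)
  have := H (Set.self_mem_Ici) (Set.mem_Ici.2 hx.le) hx
  simp only [Real.sin_zero, Real.cos_zero, Real.sinh_zero, Real.cosh_zero, mul_zero, zero_mul, mul_one, sub_zero, zero_sub] at this; linarith

lemma Bmono : StrictMonoOn (fun s => s / Real.sin s) (Set.Ioo 0 π) := by
  apply strictMonoOn_of_deriv_pos (convex_Ioo 0 π)
  · apply ContinuousOn.div continuousOn_id Real.continuous_sin.continuousOn
    intro s hs; exact (Real.sin_pos_of_pos_of_lt_pi hs.1 hs.2).ne'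
  · intro s hs
    rw [interior_Ioo] at hs
    have hsin : 0 < Real.sin s := Real.sin_pos_of_pos_of_lt_pi hs.1 hs.2
    have h1 : HasDerivAt (fun s => s / Real.sin s)
        ((1 * Real.sin s - s * Real.cos s) / (Real.sin s)^2) s :=
      (hasDerivAt_id s).div (Real.hasDerivAt_sin s) hsin.ne'
    rw [h1.deriv]
    apply div_pos; · nlinarith [key1 hs]
    positivity

lemma Bgt1 {s : ℝ} (hs : s ∈ Set.Ioo 0 π) : 1 < s / Real.sin s := by
  have hsin : 0 < Real.sin s := Real.sin_pos_of_pos_of_lt_pi hs.1 hs.2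
  rw [lt_div_iff₀ hsin, one_mul]
  exact Real.sin_lt hs.1

lemma exB {y : ℝ} (hy : 1 < y) : ∃ s ∈ Set.Ioo 0 π, s / Real.sin s = y := by
  have hπ := Real.pi_pos
  set s₂ : ℝ := π * (y + 1) / (y + 2) with hs₂def
  have hs₂mem : s₂ ∈ Set.Ioo 0 π := by
    constructor
    · apply div_pos (by nlinarith) (by linarith)
    · rw [div_lt_iff₀ (by linarith)]; nlinarith
  have hsin₂ : 0 < Real.sin s₂ := Real.sin_pos_of_pos_of_lt_pi hs₂mem.1 hs₂mem.2
  have hBs₂ : y < s₂ / Real.sin s₂ := by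
    have h1 : Real.sin s₂ ≤ π - s₂ := by
      rw [← Real.sin_pi_sub]
      exact Real.sin_le (by linarith [hs₂mem.2])
    have h2 : π - s₂ = π / (y + 2) := by field_simp [hs₂def]; have := div_mul_cancel₀ (π*(y+1)) (show y+2 ≠ 0 by linarith); rw [← hs₂def] at this; linear_combination -this
    have h3 : Real.sin s₂ ≤ π / (y + 2) := h2 ▸ h1
    rw [lt_div_iff₀ hsin₂]
    calc y * Real.sin s₂ ≤ y * (π / (y + 2)) := by
          apply mul_le_mul_of_nonneg_left h3 (by linarith)
      _ = y * π / (y+2) := by ring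
      _ < π * (y + 1) / (y + 2) := by
          rw [div_lt_div_iff_of_pos_right (by linarith : (0:ℝ) < y + 2)]; nlinarith
      _ = s₂ := by rw [hs₂def]
  -- small point
  have hev : ∀ᶠ t in nhds (0:ℝ), 1/y < Real.cos t := by
    have hc : Filter.Tendsto Real.cos (nhds 0) (nhds 1) := by
      have := Real.continuous_cos.continuousAt (x := (0:ℝ))
      rwa [ContinuousAt, Real.cos_zero] at this
    exact hc.eventually_const_lt (by rw [div_lt_one (by linarith)]; exact hy)
  obtain ⟨δ, hδ, hδmem⟩ := Metric.eventually_nhds_iff.1 hev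
  set s₁ : ℝ := min (δ/2) (min (π/4) (s₂/2)) with hs₁def
  have hs₁pos : 0 < s₁ := by
    apply lt_min (by linarith) (lt_min (by linarith) (by linarith [hs₂mem.1]))
  have hs₁ltπ : s₁ < π := lt_of_le_of_lt (le_trans (min_le_right _ _) (min_le_left _ _)) (by linarith)
  have hs₁mem : s₁ ∈ Set.Ioo 0 π := ⟨hs₁pos, hs₁ltπ⟩
  have hsin₁ : 0 < Real.sin s₁ := Real.sin_pos_of_pos_of_lt_pi hs₁pos hs₁ltπ
  have hcos₁ : 1/y < Real.cos s₁ := by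
    apply hδmem
    rw [Real.dist_eq, sub_zero, abs_of_pos hs₁pos]
    exact lt_of_le_of_lt (min_le_left _ _) (by linarith)
  have hBs₁ : s₁ / Real.sin s₁ < y := by
    rw [div_lt_iff₀ hsin₁]
    have := key1 hs₁mem
    have h4 : s₁ * (1/y) < Real.sin s₁ := lt_trans (by
      apply mul_lt_mul_of_pos_left hcos₁ hs₁pos) (by linarith [key1 hs₁mem])
    calc s₁ = y * (s₁ * (1/y)) := by field_simp
      _ < y * Real.sin s₁ := by apply mul_lt_mul_of_pos_left h4 (by linarith)
  have hs₁les₂ : s₁ ≤ s₂ := le_trans (le_trans (min_le_right _ _) (min_le_right _ _)) (by linarith [hs₂mem.1])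
  have hcont : ContinuousOn (fun s => s / Real.sin s) (Set.Icc s₁ s₂) := by
    apply ContinuousOn.div continuousOn_id Real.continuous_sin.continuousOn
    intro s hs
    exact (Real.sin_pos_of_pos_of_lt_pi (lt_of_lt_of_le hs₁pos hs.1)
      (lt_of_le_of_lt hs.2 hs₂mem.2)).ne'
  have := intermediate_value_Icc hs₁les₂ hcont
  have hy2 : y ∈ Set.Icc ((fun s => s / Real.sin s) s₁) ((fun s => s / Real.sin s) s₂) :=
    ⟨hBs₁.le, hBs₂.le⟩
  obtain ⟨s, hsmem, hsval⟩ := this hy2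
  exact ⟨s, ⟨lt_of_lt_of_le hs₁pos hsmem.1, lt_of_le_of_lt hsmem.2 hs₂mem.2⟩, hsval⟩

lemma Gmono : StrictMonoOn (fun x => Real.sinh x / x) (Set.Ioi 0) := by
  apply strictMonoOn_of_deriv_pos (convex_Ioi 0)
  · apply ContinuousOn.div Real.continuous_sinh.continuousOn continuousOn_id
    intro x hx; exact ne_of_gt hx
  · intro x hx
    rw [interior_Ioi] at hx
    have h1 : HasDerivAt (fun x => Real.sinh x / x)
        ((Real.cosh x * x - Real.sinh x * 1) / x^2) x :=
      (Real.hasDerivAt_sinh x).div (hasDerivAt_id x) (ne_of_gt hx)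
    rw [h1.deriv]
    apply div_pos; · nlinarith [key2 hx]
    exact pow_pos hx 2

lemma Ggt1 {x : ℝ} (hx : 0 < x) : 1 < Real.sinh x / x := by
  rw [lt_div_iff₀ hx, one_mul]
  exact Real.self_lt_sinh_iff.2 hx

noncomputable def Binv (y : ℝ) : ℝ :=
  if h : 1 < y then Classical.choose (exB h) else 1

lemma Binv_spec {y : ℝ} (h : 1 < y) :
    Binv y ∈ Set.Ioo 0 π ∧ Binv y / Real.sin (Binv y) = y := by
  rw [Binv, dif_pos h]
  exact ⟨(Classical.choose_spec (exB h)).1, (Classical.choose_spec (exB h)).2⟩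

lemma Binv_unique {y s : ℝ} (h : 1 < y) (hs : s ∈ Set.Ioo 0 π)
    (hval : s / Real.sin s = y) : s = Binv y := by
  exact Bmono.injOn hs (Binv_spec h).1 (by rw [hval, (Binv_spec h).2])

noncomputable def sFun (x : ℝ) : ℝ := Binv (Real.sinh x / x)

lemma sFun_mem {x : ℝ} (hx : 0 < x) : sFun x ∈ Set.Ioo 0 π := (Binv_spec (Ggt1 hx)).1

lemma sFun_eq {x : ℝ} (hx : 0 < x) : sFun x / Real.sin (sFun x) = Real.sinh x / x :=
  (Binv_spec (Ggt1 hx)).2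

lemma sFun_curve {x : ℝ} (hx : 0 < x) :
    Real.sinh x * Real.sin (sFun x) = x * sFun x := by
  have h := sFun_eq hx
  have hs := sFun_mem hx
  have hsin : 0 < Real.sin (sFun x) := Real.sin_pos_of_pos_of_lt_pi hs.1 hs.2
  field_simp at h
  linarith [h]

lemma sFun_lt_iff {x a : ℝ} (hx : 0 < x) (ha : a ∈ Set.Ioo 0 π) :
    sFun x < a ↔ Real.sinh x / x < a / Real.sin a := by
  rw [← sFun_eq hx]
  exact (Bmono.lt_iff_lt (sFun_mem hx) ha).symm

lemma lt_sFun_iff {x a : ℝ} (hx : 0 < x) (ha : a ∈ Set.Ioo 0 π) :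
    a < sFun x ↔ a / Real.sin a < Real.sinh x / x := by
  rw [← sFun_eq hx]
  exact (Bmono.lt_iff_lt ha (sFun_mem hx)).symm

lemma G_continuousAt {x : ℝ} (hx : 0 < x) :
    ContinuousAt (fun x => Real.sinh x / x) x :=
  Real.continuous_sinh.continuousAt.div continuousAt_id (ne_of_gt hx)

lemma eventually_pos {x : ℝ} (hx : 0 < x) : ∀ᶠ x' in nhds x, 0 < x' :=
  eventually_gt_nhds hx

lemma sFun_continuousAt {x : ℝ} (hx : 0 < x) : ContinuousAt sFun x := by
  have hs := sFun_mem hx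
  rw [ContinuousAt]
  apply tendsto_order.2
  constructor
  · intro a ha
    rcases le_or_gt a 0 with h0 | h0
    · filter_upwards [eventually_pos hx] with x' hx'
      exact lt_of_le_of_lt h0 (sFun_mem hx').1
    · have haI : a ∈ Set.Ioo 0 π := ⟨h0, lt_trans ha hs.2⟩
      have hBa : a / Real.sin a < Real.sinh x / x := (lt_sFun_iff hx haI).1 ha
      have hev := (G_continuousAt hx).eventually_const_lt hBa
      filter_upwards [hev, eventually_pos hx] with x' h1 h2
      exact (lt_sFun_iff h2 haI).2 h1
  · intro b hb
    rcases le_or_gt π b with h0 | h0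
    · filter_upwards [eventually_pos hx] with x' hx'
      exact lt_of_lt_of_le (sFun_mem hx').2 h0
    · have hbI : b ∈ Set.Ioo 0 π := ⟨lt_trans hs.1 hb, h0⟩
      have hBb : Real.sinh x / x < b / Real.sin b := (sFun_lt_iff hx hbI).1 hb
      have hev := (G_continuousAt hx).eventually_lt_const hBb
      filter_upwards [hev, eventually_pos hx] with x' h1 h2
      exact (sFun_lt_iff h2 hbI).2 h1

lemma sFun_hasDerivAt {x : ℝ} (hx : 0 < x) : ∃ σ : ℝ, HasDerivAt sFun σ x := by
  set s := sFun x with hsdef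
  have hs := sFun_mem hx
  have hsin : 0 < Real.sin s := Real.sin_pos_of_pos_of_lt_pi hs.1 hs.2
  set bd := (1 * Real.sin s - s * Real.cos s) / (Real.sin s)^2 with hbddef
  have hbd : HasDerivAt (fun t => t / Real.sin t) bd s :=
    (hasDerivAt_id s).div (Real.hasDerivAt_sin s) hsin.ne'
  have hbdpos : 0 < bd := by
    apply div_pos; · nlinarith [key1 hs]
    positivity
  set gd := (Real.cosh x * x - Real.sinh x * 1) / x^2 with hgddef
  have hgd : HasDerivAt (fun t => Real.sinh t / t) gd x :=
    (Real.hasDerivAt_sinh x).div (hasDerivAt_id x) (ne_of_gt hx)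
  refine ⟨(bd)⁻¹ * gd, ?_⟩
  rw [hasDerivAt_iff_tendsto_slope]
  have hslopeB := hasDerivAt_iff_tendsto_slope.1 hbd
  have hslopeG := hasDerivAt_iff_tendsto_slope.1 hgd
  have hevpos : ∀ᶠ x' in nhdsWithin x {x}ᶜ, 0 < x' :=
    (eventually_pos hx).filter_mono nhdsWithin_le_nhds
  have hsf : Filter.Tendsto sFun (nhdsWithin x {x}ᶜ) (nhdsWithin s {s}ᶜ) := by
    rw [tendsto_nhdsWithin_iff]
    constructor
    · exact ((sFun_continuousAt hx)).tendsto.mono_left nhdsWithin_le_nhds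
    · filter_upwards [self_mem_nhdsWithin, hevpos] with x' hne hpos
      simp only [Set.mem_compl_iff, Set.mem_singleton_iff] at hne ⊢
      intro heq
      apply hne
      have h1 : Real.sinh x' / x' = Real.sinh x / x := by
        rw [← sFun_eq hpos, ← sFun_eq hx, heq]
      exact Gmono.injOn hpos hx h1
  have key : ∀ᶠ x' in nhdsWithin x {x}ᶜ,
      (slope (fun t => t / Real.sin t) s (sFun x'))⁻¹ * slope (fun t => Real.sinh t / t) x x'
        = slope sFun x x' := by
    filter_upwards [self_mem_nhdsWithin, hevpos] with x' hne hpos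
    simp only [Set.mem_compl_iff, Set.mem_singleton_iff] at hne
    have hGne : Real.sinh x' / x' - Real.sinh x / x ≠ 0 := by
      have := Gmono.injOn.ne hpos hx hne
      simpa [sub_ne_zero] using this
    have hsne : sFun x' - s ≠ 0 := by
      rw [sub_ne_zero]
      intro heq
      exact hGne (by rw [← sFun_eq hpos, ← sFun_eq hx, heq]; simp [hsdef])
    have hxne : x' - x ≠ 0 := sub_ne_zero.2 hne
    have hB' : sFun x' / Real.sin (sFun x') = Real.sinh x' / x' := sFun_eq hpos
    have hB : s / Real.sin s = Real.sinh x / x := sFun_eq hx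
    rw [slope_def_field, slope_def_field, slope_def_field, hB', hB]
    rw [inv_div, div_mul_div_comm, mul_comm (sFun x' - s) _, mul_div_mul_left _ _ hGne]
  apply Filter.Tendsto.congr' key
  exact ((hslopeB.comp hsf).inv₀ hbdpos.ne').mul hslopeG

noncomputable def tF (x : ℝ) : ℝ :=
  (x^2 - (sFun x)^2)/2 - Real.cosh x * Real.cos (sFun x) + 1

lemma P_pos {x : ℝ} (hx : 0 < x) : 0 < x - Real.sinh x * Real.cos (sFun x) := by
  have hs := sFun_mem hx
  have hsin : 0 < Real.sin (sFun x) := Real.sin_pos_of_pos_of_lt_pi hs.1 hs.2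
  have hcurve := sFun_curve hx
  have hk := key1 hs
  have hsh : 0 < Real.sinh x := Real.sinh_pos_iff.2 hx
  have h1 : Real.sinh x * Real.cos (sFun x) * Real.sin (sFun x) < x * Real.sin (sFun x) := by
    calc Real.sinh x * Real.cos (sFun x) * Real.sin (sFun x)
        = (Real.sinh x * Real.sin (sFun x)) * Real.cos (sFun x) := by ring
      _ = x * (sFun x * Real.cos (sFun x)) := by rw [hcurve]; ring
      _ < x * Real.sin (sFun x) := mul_lt_mul_of_pos_left hk hx
  have h2 := lt_of_mul_lt_mul_right h1 hsin.le
  linarith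

lemma tF_hasDerivAt {x : ℝ} (hx : 0 < x) :
    ∃ d : ℝ, HasDerivAt tF d x ∧ 0 < d := by
  obtain ⟨σ, hσ⟩ := sFun_hasDerivAt hx
  set s := sFun x with hsdef
  have hs := sFun_mem hx
  -- derivative of tF
  have hcos : HasDerivAt (fun t => Real.cos (sFun t)) (-Real.sin s * σ) x := by
    have := (Real.hasDerivAt_cos s).comp x hσ; exact this
  have hD : HasDerivAt tF
      ((2*x - 2*s*σ)/2 - (Real.sinh x * Real.cos s + Real.cosh x * (-Real.sin s * σ)) + 0) x := by
    apply HasDerivAt.add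
    apply HasDerivAt.sub
    · apply HasDerivAt.div_const
      have h1 : HasDerivAt (fun t : ℝ => t^2) (2*x) x := by
        simpa using (hasDerivAt_pow 2 x)
      have h2 : HasDerivAt (fun t : ℝ => (sFun t)^2) (2*s*σ) x := by
        have := ((hasDerivAt_pow 2 s).comp x hσ)
        exact this.congr_deriv (by rw [show (2:ℕ) - 1 = 1 from rfl, pow_one]; norm_num)
      exact h1.sub h2
    · exact (Real.hasDerivAt_cosh x).mul hcos
    · exact hasDerivAt_const x 1
  -- derivative of the constraint J = 0
  have hsin' : HasDerivAt (fun t => Real.sin (sFun t)) (Real.cos s * σ) x := by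
    have := (Real.hasDerivAt_sin s).comp x hσ; exact this
  have hJ : HasDerivAt (fun t => Real.sinh t * Real.sin (sFun t) - t * sFun t)
      (Real.cosh x * Real.sin s + Real.sinh x * (Real.cos s * σ) - (1 * s + x * σ)) x :=
    ((Real.hasDerivAt_sinh x).mul hsin').sub ((hasDerivAt_id x).mul hσ)
  have hJ0 : HasDerivAt (fun t => Real.sinh t * Real.sin (sFun t) - t * sFun t) 0 x := by
    have hev : (fun t => Real.sinh t * Real.sin (sFun t) - t * sFun t) =ᶠ[nhds x] (fun _ => 0) := by
      filter_upwards [eventually_pos hx] with t ht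
      rw [sFun_curve ht]; ring
    exact (hasDerivAt_const x (0:ℝ)).congr_of_eventuallyEq hev
  have hQP : Real.cosh x * Real.sin s - s = σ * (x - Real.sinh x * Real.cos s) := by
    have h0 := hJ.unique hJ0
    linear_combination h0
  refine ⟨_, hD, ?_⟩
  have hP := P_pos hx
  rw [← hsdef] at hP
  have hval : (2*x - 2*s*σ)/2 - (Real.sinh x * Real.cos s + Real.cosh x * (-Real.sin s * σ)) + 0
      = (x - Real.sinh x * Real.cos s) * (1 + σ^2) := by
    linear_combination σ * hQP
  rw [hval]
  positivity

lemma tF_strictMono : StrictMonoOn tF (Set.Ioi 0) := by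
  apply strictMonoOn_of_deriv_pos (convex_Ioi 0)
  · intro x hx
    obtain ⟨d, hd, _⟩ := tF_hasDerivAt hx
    exact hd.continuousAt.continuousWithinAt
  · intro x hx
    rw [interior_Ioi] at hx
    obtain ⟨d, hd, hdpos⟩ := tF_hasDerivAt hx
    rwa [hd.deriv]

lemma sFun_tendsto_zero : Filter.Tendsto sFun (nhdsWithin 0 (Set.Ioi 0)) (nhds 0) := by
  apply tendsto_order.2
  constructor
  · intro a ha
    filter_upwards [self_mem_nhdsWithin] with x hx
    exact lt_of_lt_of_le ha (le_of_lt (sFun_mem hx).1)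
  · intro b hb
    rcases le_or_gt π b with h0 | h0
    · filter_upwards [self_mem_nhdsWithin] with x hx
      exact lt_of_lt_of_le (sFun_mem hx).2 h0
    · have hbI : b ∈ Set.Ioo 0 π := ⟨hb, h0⟩
      have hB : 1 < b / Real.sin b := Bgt1 hbI
      have hcosh : Filter.Tendsto Real.cosh (nhdsWithin 0 (Set.Ioi 0)) (nhds 1) := by
        have := Real.continuous_cosh.continuousAt (x := (0:ℝ))
        rw [ContinuousAt, Real.cosh_zero] at this
        exact this.mono_left nhdsWithin_le_nhds
      have hev := hcosh.eventually_lt_const hB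
      filter_upwards [hev, self_mem_nhdsWithin] with x h1 h2
      apply (sFun_lt_iff h2 hbI).2
      calc Real.sinh x / x ≤ Real.cosh x := by
            rw [div_le_iff₀ h2]
            nlinarith [key2 h2]
        _ < b / Real.sin b := h1

lemma tF_tendsto_zero : Filter.Tendsto tF (nhdsWithin 0 (Set.Ioi 0)) (nhds 0) := by
  have hid : Filter.Tendsto (fun x : ℝ => x) (nhdsWithin 0 (Set.Ioi 0)) (nhds 0) :=
    Filter.Tendsto.mono_left Filter.tendsto_id nhdsWithin_le_nhds
  have h1 : Filter.Tendsto (fun x => (x^2 - (sFun x)^2)/2) (nhdsWithin 0 (Set.Ioi 0)) (nhds 0) := by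
    have := ((hid.pow 2).sub (sFun_tendsto_zero.pow 2)).div_const 2
    simpa using this
  have h2 : Filter.Tendsto (fun x => Real.cosh x * Real.cos (sFun x))
      (nhdsWithin 0 (Set.Ioi 0)) (nhds 1) := by
    have hcosh : Filter.Tendsto (fun x => Real.cosh x) (nhdsWithin 0 (Set.Ioi 0)) (nhds 1) := by
      have := Real.continuous_cosh.continuousAt (x := (0:ℝ))
      rw [ContinuousAt, Real.cosh_zero] at this
      exact this.mono_left nhdsWithin_le_nhds
    have hcos : Filter.Tendsto (fun x => Real.cos (sFun x)) (nhdsWithin 0 (Set.Ioi 0)) (nhds 1) := by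
      have hc := Real.continuous_cos.continuousAt (x := (0:ℝ))
      rw [ContinuousAt, Real.cos_zero] at hc
      exact hc.comp sFun_tendsto_zero
    simpa using hcosh.mul hcos
  have := (h1.sub h2).add (tendsto_const_nhds (x := (1:ℝ)))
  show Filter.Tendsto (fun x => (x^2 - (sFun x)^2)/2 - Real.cosh x * Real.cos (sFun x) + 1) _ _
  simpa using this

lemma sinh_div_big {x : ℝ} (hx : 9 ≤ x) : 1/2 + x/8 ≤ Real.sinh x / x := by
  have hx0 : (0:ℝ) < x := by linarith
  rw [le_div_iff₀ hx0]
  have h1 : x/2 + 1 ≤ Real.exp (x/2) := Real.add_one_le_exp (x/2)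
  have hexp : (1 + x/2)^2 ≤ Real.exp x := by
    calc (1 + x/2)^2 ≤ (Real.exp (x/2))^2 := by
          apply pow_le_pow_left₀ (by linarith) (by linarith) 2
      _ = Real.exp x := by rw [sq, ← Real.exp_add]; norm_num
  have hneg : Real.exp (-x) ≤ 1 := Real.exp_le_one_iff.2 (by linarith)
  have hsinh : x/2 + x^2/8 ≤ Real.sinh x := by
    rw [Real.sinh_eq]
    nlinarith [hexp, hneg]
  nlinarith [hsinh]

lemma sFun_big {x : ℝ} (hx : 9 ≤ x) : π/2 ≤ sFun x := by
  have hx0 : (0:ℝ) < x := by linarith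
  have hπ := Real.pi_pos
  have hhalf : π/2 ∈ Set.Ioo 0 π := ⟨by linarith, by linarith⟩
  by_contra h
  push_neg at h
  have := (sFun_lt_iff hx0 hhalf).1 h
  rw [Real.sin_pi_div_two, div_one] at this
  have h2 := sinh_div_big hx
  have hπlt : π < 3.15 := Real.pi_lt_d2
  linarith

lemma tF_big {x : ℝ} (hx : 9 ≤ x) : (x^2 - π^2)/2 + 1 ≤ tF x := by
  have hx0 : (0:ℝ) < x := by linarith
  have hs := sFun_mem hx0
  have hcos : Real.cos (sFun x) ≤ 0 :=
    Real.cos_nonpos_of_pi_div_two_le_of_le (sFun_big hx) (by linarith [hs.2, Real.pi_pos])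
  have hcosh : 0 < Real.cosh x := Real.cosh_pos x
  have hs2 : (sFun x)^2 ≤ π^2 := by
    have := hs.2
    nlinarith [hs.1]
  rw [tF]
  nlinarith [mul_nonneg hcosh.le (neg_nonneg.2 hcos)]

lemma exists_x {τ : ℝ} (hτ : 0 < τ) : ∃ x, 0 < x ∧ tF x = τ := by
  have hπ := Real.pi_pos
  have hev : ∀ᶠ x in nhdsWithin 0 (Set.Ioi 0), tF x < τ :=
    tF_tendsto_zero.eventually_lt_const hτ
  obtain ⟨x₁, hx₁lt, hx₁pos⟩ := (hev.and self_mem_nhdsWithin).exists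
  set x₂ : ℝ := max 9 (π + τ) with hx₂def
  have hx₂9 : 9 ≤ x₂ := le_max_left _ _
  have hx₂πτ : π + τ ≤ x₂ := le_max_right _ _
  have hx₂pos : 0 < x₂ := by linarith
  have hτx₂ : τ < tF x₂ := by
    have h1 := tF_big hx₂9
    nlinarith [sq_nonneg (τ - 1), mul_pos hπ hτ, sq_nonneg (x₂ - (π + τ))]
  have hx₁x₂ : x₁ ≤ x₂ := by
    by_contra h
    push_neg at h
    have := tF_strictMono (Set.mem_Ioi.2 hx₂pos) (Set.mem_Ioi.2 hx₁pos) h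
    linarith
  have hcont : ContinuousOn tF (Set.Icc x₁ x₂) := by
    intro y hy
    obtain ⟨d, hd, _⟩ := tF_hasDerivAt (lt_of_lt_of_le hx₁pos hy.1)
    exact hd.continuousAt.continuousWithinAt
  obtain ⟨x₀, hx₀mem, hx₀val⟩ := intermediate_value_Icc hx₁x₂ hcont ⟨hx₁lt.le, hτx₂.le⟩
  exact ⟨x₀, lt_of_lt_of_le hx₁pos hx₀mem.1, hx₀val⟩

lemma complex_eval (x s : ℝ) :
    ((x:ℂ) - (s:ℂ)*Complex.I)^2/2 - Complex.cosh ((x:ℂ) - (s:ℂ)*Complex.I) + 1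
      = (((x^2 - s^2)/2 - Real.cosh x * Real.cos s + 1 : ℝ) : ℂ)
        + ((Real.sinh x * Real.sin s - x*s : ℝ) : ℂ) * Complex.I := by
  rw [Complex.cosh_sub, Complex.cosh_mul_I, Complex.sinh_mul_I]
  push_cast
  linear_combination (((s:ℂ)^2)/2) * Complex.I_sq


/-- For every `τ > 0` there is a unique point `ζ` of the steepest descent path
(for `ρ = 1`) in the strip `Re ζ > 0`, `−π < Im ζ < 0`, such that
`ζ²/2 − cosh ζ + 1 = τ`. -/
theorem steepest_descent_path_param (τ : ℝ) (hτ : 0 < τ) :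
    ∃! ζ : ℂ, (0 < ζ.re ∧ -π < ζ.im ∧ ζ.im < 0) ∧
      ζ ^ 2 / 2 - Complex.cosh ζ + 1 = (τ : ℂ) := by
  obtain ⟨x₀, hx₀, hval₀⟩ := exists_x hτ
  have hs₀ := sFun_mem hx₀
  refine ⟨(x₀:ℂ) - (sFun x₀ : ℂ)*Complex.I, ⟨⟨?_, ?_, ?_⟩, ?_⟩, ?_⟩
  · simpa using hx₀
  · simpa using hs₀.2
  · simpa using hs₀.1
  · rw [complex_eval]
    have h0 : Real.sinh x₀ * Real.sin (sFun x₀) - x₀ * sFun x₀ = 0 := by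
      rw [sFun_curve hx₀]; ring
    have h1 : (x₀^2 - (sFun x₀)^2)/2 - Real.cosh x₀ * Real.cos (sFun x₀) + 1 = τ := hval₀
    rw [h0, h1]
    simp
  · rintro ζ ⟨⟨h1, h2, h3⟩, heq⟩
    have hx : 0 < ζ.re := h1
    have hsI : -ζ.im ∈ Set.Ioo 0 π := ⟨by linarith, by linarith⟩
    have hζ : ζ = ((ζ.re : ℝ):ℂ) - ((-ζ.im : ℝ):ℂ)*Complex.I := by
      apply Complex.ext <;> simp
    rw [hζ, complex_eval] at heq
    rw [Complex.ext_iff] at heq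
    simp only [Complex.add_re, Complex.ofReal_re, Complex.mul_re, Complex.I_re,
      Complex.I_im, Complex.ofReal_im, Complex.add_im, Complex.mul_im] at heq
    obtain ⟨hre, him⟩ := heq
    have hA : (ζ.re^2 - (-ζ.im)^2)/2 - Real.cosh ζ.re * Real.cos (-ζ.im) + 1 = τ := by
      linarith [hre]
    have hB : Real.sinh ζ.re * Real.sin (-ζ.im) - ζ.re * (-ζ.im) = 0 := by
      linarith [him]
    have hsin : 0 < Real.sin (-ζ.im) := Real.sin_pos_of_pos_of_lt_pi hsI.1 hsI.2
    have hBeq : (-ζ.im) / Real.sin (-ζ.im) = Real.sinh ζ.re / ζ.re := by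
      rw [div_eq_div_iff hsin.ne' hx.ne']
      linear_combination -hB
    have hss : -ζ.im = sFun ζ.re := Binv_unique (Ggt1 hx) hsI hBeq
    have htFx : tF ζ.re = τ := by
      rw [tF, ← hss]
      exact hA
    have hxx : ζ.re = x₀ :=
      tF_strictMono.injOn (Set.mem_Ioi.2 hx) (Set.mem_Ioi.2 hx₀) (by rw [htFx, hval₀])
    rw [hζ, hss, hxx]
end
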